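/- arXiv:2305.05577 — 3 statements merged into one kernel-verified Lean document; each statement's English description precedes it below -/
import Mathlib

section
/- Let G be a group acting on vector spaces V and W via representations ρ₁ and ρ₂. If F : V → 2^G is a G-equivariant frame (i.e., F(ρ₁(g)X) = g·F(X) for all g, X, with g·F(X) = {gh : h ∈ F(X)}) with F(X) finite and nonempty for all X, then for any function Φ : V → W, the frame average ⟨Φ⟩_F(X) = (1/|F(X)|) Σ_{g ∈ F(X)} ρ₂(g) Φ(ρ₁(g)⁻¹ X) is G-equivariant: ⟨Φ⟩_F(ρ₁(g)X) = ρ₂(g) ⟨Φ⟩_F(X) for all g ∈ G, X ∈ V. -/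
open scoped BigOperators

/-- Frame averaging of `Φ` over the frame `F`, with representations `ρ₁, ρ₂`. -/
noncomputable def frameAvg {G V W : Type*} [Group G]
    [AddCommGroup V] [Module ℝ V] [AddCommGroup W] [Module ℝ W]
    (ρ₁ : G →* (V ≃ₗ[ℝ] V)) (ρ₂ : G →* (W ≃ₗ[ℝ] W))
    (F : V → Finset G) (Φ : V → W) (X : V) : W :=
  ((F X).card : ℝ)⁻¹ • ∑ g ∈ F X, ρ₂ g (Φ ((ρ₁ g)⁻¹ X))

theorem MonoidHom.inv_map_mul_apply_map {G R V : Type*} [Group G] [Semiring R]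
    [AddCommMonoid V] [Module R V] (ρ : G →* (V ≃ₗ[R] V)) (g h : G) (x : V) :
    (ρ (g * h))⁻¹ (ρ g x) = (ρ h)⁻¹ x := by
  rw [map_mul, mul_inv_rev, LinearEquiv.mul_apply, ← LinearEquiv.mul_apply (ρ g)⁻¹, inv_mul_cancel,
    LinearEquiv.coe_one, id_eq]

theorem frameAvg_equivariant_general {G V W : Type*} [Group G] [DecidableEq G]
    [AddCommGroup V] [Module ℝ V] [AddCommGroup W] [Module ℝ W]
    (ρ₁ : G →* (V ≃ₗ[ℝ] V)) (ρ₂ : G →* (W ≃ₗ[ℝ] W))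
    (F : V → Finset G)
    (hF : ∀ (g : G) (X : V), F (ρ₁ g X) = (F X).image (fun h => g * h))
    (Φ : V → W) :
    ∀ (g : G) (X : V),
      frameAvg ρ₁ ρ₂ F Φ (ρ₁ g X) = ρ₂ g (frameAvg ρ₁ ρ₂ F Φ X) := by
  intro g X
  have hmul : Function.Injective (g * ·) := mul_right_injective g
  rw [frameAvg, frameAvg, hF, Finset.card_image_of_injective _ hmul,
    Finset.sum_image hmul.injOn, map_smul, map_sum]
  simp only [ρ₁.inv_map_mul_apply_map, map_mul ρ₂, LinearEquiv.mul_apply]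

/-- If `F` is a `G`-equivariant frame with finite nonempty values, then the frame
average of any map `Φ` is `G`-equivariant. -/
theorem frameAvg_equivariant {G V W : Type*} [Group G] [DecidableEq G]
    [AddCommGroup V] [Module ℝ V] [AddCommGroup W] [Module ℝ W]
    (ρ₁ : G →* (V ≃ₗ[ℝ] V)) (ρ₂ : G →* (W ≃ₗ[ℝ] W))
    (F : V → Finset G)
    (hne : ∀ X : V, (F X).Nonempty)
    (hF : ∀ (g : G) (X : V), F (ρ₁ g X) = (F X).image (fun h => g * h))
    (Φ : V → W) :
    ∀ (g : G) (X : V),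
      frameAvg ρ₁ ρ₂ F Φ (ρ₁ g X) = ρ₂ g (frameAvg ρ₁ ρ₂ F Φ X) :=
  frameAvg_equivariant_general ρ₁ ρ₂ F hF Φ
end

section
/- With the same setup, if ρ₂(g) = id_W for all g ∈ G (the invariant case), then the frame average ⟨Φ⟩_F(X) = (1/|F(X)|) Σ_{g ∈ F(X)} Φ(ρ₁(g)⁻¹ X) is G-invariant: ⟨Φ⟩_F(ρ₁(g)X) = ⟨Φ⟩_F(X) for all g ∈ G and X ∈ V. -/
/- Frame averaging is invariant because an equivariant frame moves by left translation,
`F (g • X) = g • F X`, which is a bijection `F X ≃ F (g • X)`; the summand attached to `g * h`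
at `g • X` is `Φ ((g * h)⁻¹ • g • X) = Φ (h⁻¹ • X)`, the summand attached to `h` at `X`. -/

open scoped BigOperators

/-- Frame averaging in the invariant case (`ρ₂(g) = id` for all `g`). -/
noncomputable def frameAvgInv {G V W : Type*} [Group G]
    [AddCommGroup V] [Module ℝ V] [AddCommGroup W] [Module ℝ W]
    (ρ₁ : G →* (V ≃ₗ[ℝ] V)) (F : V → Finset G) (Φ : V → W) (X : V) : W :=
  ((F X).card : ℝ)⁻¹ • ∑ g ∈ F X, Φ ((ρ₁ g)⁻¹ X)

theorem MonoidHom.inv_mul_smul_smul {G M V : Type*} [Group G] [Group M] [MulAction M V]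
    (ρ : G →* M) (g h : G) (X : V) : (ρ (g * h))⁻¹ • ρ g • X = (ρ h)⁻¹ • X := by
  rw [map_mul, mul_inv_rev, mul_smul, inv_smul_smul]

theorem MonoidHom.inv_mul_apply_apply {G R V : Type*} [Group G] [Semiring R] [AddCommMonoid V]
    [Module R V] (ρ : G →* (V ≃ₗ[R] V)) (g h : G) (X : V) :
    (ρ (g * h))⁻¹ (ρ g X) = (ρ h)⁻¹ X :=
  ρ.inv_mul_smul_smul g h X

theorem frameAvgInv_invariant_general {G V W : Type*} [Group G] [DecidableEq G]
    [AddCommGroup V] [Module ℝ V] [AddCommGroup W] [Module ℝ W]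
    (ρ₁ : G →* (V ≃ₗ[ℝ] V))
    (F : V → Finset G)
    (hF : ∀ (g : G) (X : V), F (ρ₁ g X) = (F X).image (fun h => g * h))
    (Φ : V → W) :
    ∀ (g : G) (X : V),
      frameAvgInv ρ₁ F Φ (ρ₁ g X) = frameAvgInv ρ₁ F Φ X := by
  intro g X
  have htranslate : Function.Injective (g * ·) := mul_right_injective g
  rw [frameAvgInv, frameAvgInv, hF, Finset.card_image_of_injective _ htranslate,
    Finset.sum_image htranslate.injOn]
  simp only [ρ₁.inv_mul_apply_apply]

/-- If `ρ₂` is the trivial representation, the frame average is `G`-invariant. -/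
theorem frameAvgInv_invariant {G V W : Type*} [Group G] [DecidableEq G]
    [AddCommGroup V] [Module ℝ V] [AddCommGroup W] [Module ℝ W]
    (ρ₁ : G →* (V ≃ₗ[ℝ] V))
    (F : V → Finset G)
    (hne : ∀ X : V, (F X).Nonempty)
    (hF : ∀ (g : G) (X : V), F (ρ₁ g X) = (F X).image (fun h => g * h))
    (Φ : V → W) :
    ∀ (g : G) (X : V),
      frameAvgInv ρ₁ F Φ (ρ₁ g X) = frameAvgInv ρ₁ F Φ X :=
  frameAvgInv_invariant_general ρ₁ F hF Φ
end

section
/- The full frame-averaged equivariant prediction using the 8-element PCA frame, ⟨Φ⟩(X) = (1/8) Σ_{U ∈ F(X)} Φ((X − 1tᵀ)U) Uᵀ, is E(3)-equivariant in the rotation part and translation-invariant: for (R,b) ∈ E(3), ⟨Φ⟩(XRᵀ + 1bᵀ) = ⟨Φ⟩(X) Rᵀ. -/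
open Matrix
open scoped BigOperators

/-- The rank-one matrix `1 tᵀ` whose rows all equal `t`. -/
def onesT {n : ℕ} (t : Fin 3 → ℝ) : Matrix (Fin n) (Fin 3) ℝ :=
  Matrix.of fun _ j => t j

/-- The centroid `t = (1/n) Xᵀ 1` of the rows of `X`. -/
noncomputable def centroid {n : ℕ} (X : Matrix (Fin n) (Fin 3) ℝ) : Fin 3 → ℝ :=
  (n : ℝ)⁻¹ • (Xᵀ *ᵥ fun _ => (1 : ℝ))

/-- The covariance matrix `Σ(X) = (X − 1tᵀ)ᵀ (X − 1tᵀ)` of `X` about its centroid. -/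
noncomputable def cov {n : ℕ} (X : Matrix (Fin n) (Fin 3) ℝ) :
    Matrix (Fin 3) (Fin 3) ℝ :=
  (X - onesT (centroid X))ᵀ * (X - onesT (centroid X))

/-- Sign `±1` attached to a Boolean. -/
def signOf (e : Bool) : ℝ := if e then 1 else -1

/-- The frame matrix `[ε₁u₁, ε₂u₂, ε₃u₃]` with columns the signed
eigenvectors. -/
def signedU (u : Fin 3 → (Fin 3 → ℝ)) (ε : Fin 3 → Bool) :
    Matrix (Fin 3) (Fin 3) ℝ :=
  Matrix.of fun i j => signOf (ε j) * u j i

/-- Full frame-averaged equivariant prediction over the 8-element PCA frame. -/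
noncomputable def faEquiv {n : ℕ}
    (Φ : Matrix (Fin n) (Fin 3) ℝ → Matrix (Fin n) (Fin 3) ℝ)
    (u : Fin 3 → (Fin 3 → ℝ)) (X : Matrix (Fin n) (Fin 3) ℝ) :
    Matrix (Fin n) (Fin 3) ℝ :=
  (8 : ℝ)⁻¹ • ∑ ε : Fin 3 → Bool,
    Φ ((X - onesT (centroid X)) * signedU u ε) * (signedU u ε)ᵀ


/-! Centering removes the translation and turns `X` into `(X - 1tᵀ) Rᵀ`, so
`Σ(XRᵀ + 1bᵀ) = R Σ(X) Rᵀ`. Since the eigenvalues are simple, `Rᵀ vⱼ` is a unit eigenvector of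
`Σ(X)` for `λⱼ`, hence `vⱼ = ±R uⱼ`. The frame of `XRᵀ + 1bᵀ` is therefore `R` times the frame
of `X` with the signs flipped by a fixed pattern; that flip permutes the 8 sign choices, and the
factor `R` cancels inside `Φ` and survives as `Rᵀ` outside. -/

lemma onesT_add {n : ℕ} (a c : Fin 3 → ℝ) :
    onesT (n := n) (a + c) = onesT a + onesT c := by
  ext i j; simp [onesT]

lemma onesT_mulVec {n : ℕ} (R : Matrix (Fin 3) (Fin 3) ℝ) (a : Fin 3 → ℝ) :
    onesT (n := n) (R *ᵥ a) = onesT a * Rᵀ := by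
  ext i j
  simp [onesT, Matrix.mul_apply, mulVec, dotProduct, mul_comm]

lemma centroid_add {n : ℕ} (A B : Matrix (Fin n) (Fin 3) ℝ) :
    centroid (A + B) = centroid A + centroid B := by
  simp [centroid, Matrix.transpose_add, Matrix.add_mulVec, smul_add]

lemma centroid_mul_transpose {n : ℕ} (X : Matrix (Fin n) (Fin 3) ℝ)
    (R : Matrix (Fin 3) (Fin 3) ℝ) :
    centroid (X * Rᵀ) = R *ᵥ centroid X := by
  simp [centroid, Matrix.transpose_mul, ← Matrix.mulVec_mulVec, Matrix.mulVec_smul]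

lemma centroid_onesT {n : ℕ} (hn : 0 < n) (b : Fin 3 → ℝ) :
    centroid (onesT (n := n) b) = b := by
  funext j
  have hn' : (n : ℝ) ≠ 0 := Nat.cast_ne_zero.mpr hn.ne'
  simp only [centroid, onesT, Pi.smul_apply, mulVec, dotProduct, transpose_apply, of_apply,
    mul_one, Finset.sum_const, Finset.card_univ, Fintype.card_fin, nsmul_eq_mul, smul_eq_mul]
  exact inv_mul_cancel_left₀ hn' (b j)

lemma sub_onesT_centroid_mul_transpose_add_onesT {n : ℕ} (hn : 0 < n)
    (X : Matrix (Fin n) (Fin 3) ℝ) (R : Matrix (Fin 3) (Fin 3) ℝ) (b : Fin 3 → ℝ) :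
    (X * Rᵀ + onesT b) - onesT (centroid (X * Rᵀ + onesT b))
      = (X - onesT (centroid X)) * Rᵀ := by
  rw [centroid_add, centroid_mul_transpose, centroid_onesT hn, onesT_add,
    onesT_mulVec, Matrix.sub_mul]
  abel

lemma cov_mul_transpose_add_onesT {n : ℕ} (hn : 0 < n) (X : Matrix (Fin n) (Fin 3) ℝ)
    (R : Matrix (Fin 3) (Fin 3) ℝ) (b : Fin 3 → ℝ) :
    cov (X * Rᵀ + onesT b) = R * cov X * Rᵀ := by
  rw [cov, sub_onesT_centroid_mul_transpose_add_onesT hn, Matrix.transpose_mul,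
    Matrix.transpose_transpose, cov, Matrix.mul_assoc, Matrix.mul_assoc, Matrix.mul_assoc]

lemma transpose_cov {n : ℕ} (X : Matrix (Fin n) (Fin 3) ℝ) : (cov X)ᵀ = cov X := by
  rw [cov, Matrix.transpose_mul, Matrix.transpose_transpose]

section Eigenbasis

variable {ι : Type*} [Fintype ι] {A : Matrix ι ι ℝ}

lemma dotProduct_eq_zero_of_mulVec_eq_smul (hA : Aᵀ = A) {μ ν : ℝ} (hμν : μ ≠ ν)
    {x y : ι → ℝ} (hx : A *ᵥ x = μ • x) (hy : A *ᵥ y = ν • y) : x ⬝ᵥ y = 0 := by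
  have h : μ * (x ⬝ᵥ y) = ν * (x ⬝ᵥ y) := by
    calc μ * (x ⬝ᵥ y) = (A *ᵥ x) ⬝ᵥ y := by rw [hx, smul_dotProduct, smul_eq_mul]
      _ = x ⬝ᵥ (A *ᵥ y) := by rw [dotProduct_mulVec, ← mulVec_transpose, hA]
      _ = ν * (x ⬝ᵥ y) := by rw [hy, dotProduct_smul, smul_eq_mul]
  by_contra hxy
  exact hμν (mul_right_cancel₀ hxy h)

variable [DecidableEq ι] {u : ι → ι → ℝ}

lemma sum_dotProduct_smul_of_orthonormal
    (hu : ∀ i j, u i ⬝ᵥ u j = if i = j then 1 else 0) (w : ι → ℝ) :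
    ∑ m, (u m ⬝ᵥ w) • u m = w := by
  have hUUt : Matrix.of u * (Matrix.of u)ᵀ = 1 := by
    ext i j
    simpa [Matrix.mul_apply, Matrix.one_apply, dotProduct] using hu i j
  calc ∑ m, (u m ⬝ᵥ w) • u m = (Matrix.of u *ᵥ w) ᵥ* Matrix.of u := (vecMul_eq_sum _ _).symm
    _ = ((Matrix.of u)ᵀ * Matrix.of u) *ᵥ w := by rw [← mulVec_transpose, mulVec_mulVec]
    _ = w := by rw [mul_eq_one_comm.mp hUUt, one_mulVec]

variable {lam : ι → ℝ}

lemma eq_dotProduct_smul_of_mulVec_eq_smul (hA : Aᵀ = A)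
    (hu : ∀ i j, u i ⬝ᵥ u j = if i = j then 1 else 0) (heig : ∀ j, A *ᵥ u j = lam j • u j)
    (hlam : Function.Injective lam) {j : ι} {w : ι → ℝ} (hw : A *ᵥ w = lam j • w) :
    w = (u j ⬝ᵥ w) • u j := by
  conv_lhs => rw [← sum_dotProduct_smul_of_orthonormal hu w]
  refine Finset.sum_eq_single j (fun m _ hmj => ?_) (by simp)
  rw [dotProduct_eq_zero_of_mulVec_eq_smul hA (hlam.ne hmj) (heig m) hw, zero_smul]

lemma exists_signOf_smul_of_mulVec_eq_smul (hA : Aᵀ = A)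
    (hu : ∀ i j, u i ⬝ᵥ u j = if i = j then 1 else 0) (heig : ∀ j, A *ᵥ u j = lam j • u j)
    (hlam : Function.Injective lam) {j : ι} {w : ι → ℝ} (hw : A *ᵥ w = lam j • w)
    (hw1 : w ⬝ᵥ w = 1) : ∃ e, w = signOf e • u j := by
  have hwu := eq_dotProduct_smul_of_mulVec_eq_smul hA hu heig hlam hw
  have hc : (u j ⬝ᵥ w) * (u j ⬝ᵥ w) = 1 := by
    rw [← hw1, hwu, smul_dotProduct, dotProduct_smul, hu j j, if_pos rfl]
    simp
  rcases mul_self_eq_one_iff.mp hc with h | h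
  · exact ⟨true, by rw [hwu, h, signOf, if_pos rfl]⟩
  · exact ⟨false, by rw [hwu, h, signOf]; rfl⟩

end Eigenbasis

section Orthogonal

variable {ι : Type*} [Fintype ι] [DecidableEq ι] {R : Matrix ι ι ℝ}

lemma mulVec_transpose_mulVec_eq_smul (hR : Rᵀ * R = 1) {A : Matrix ι ι ℝ} {μ : ℝ}
    {v : ι → ℝ} (hv : (R * A * Rᵀ) *ᵥ v = μ • v) : A *ᵥ (Rᵀ *ᵥ v) = μ • (Rᵀ *ᵥ v) := by
  calc A *ᵥ (Rᵀ *ᵥ v) = Rᵀ *ᵥ ((R * A * Rᵀ) *ᵥ v) := by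
        rw [mulVec_mulVec, mulVec_mulVec, ← Matrix.mul_assoc, ← Matrix.mul_assoc, hR,
          Matrix.one_mul]
    _ = μ • (Rᵀ *ᵥ v) := by rw [hv, mulVec_smul]

lemma transpose_mulVec_dotProduct_self (hR : R * Rᵀ = 1) (v : ι → ℝ) :
    (Rᵀ *ᵥ v) ⬝ᵥ (Rᵀ *ᵥ v) = v ⬝ᵥ v := by
  rw [dotProduct_mulVec, mulVec_transpose, vecMul_vecMul, hR, vecMul_one]

end Orthogonal

lemma signOf_mul_signOf (a c : Bool) : signOf a * signOf c = signOf (a == c) := by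
  cases a <;> cases c <;> simp [signOf]

lemma signedU_eq_mul_signedU {u v : Fin 3 → Fin 3 → ℝ} {R : Matrix (Fin 3) (Fin 3) ℝ}
    {s : Fin 3 → Bool} (hv : ∀ j, v j = signOf (s j) • (R *ᵥ u j)) (ε : Fin 3 → Bool) :
    signedU v ε = R * signedU u (fun j => ε j == s j) := by
  ext i j
  simp only [signedU, Matrix.mul_apply, Matrix.of_apply, hv, Pi.smul_apply, smul_eq_mul, mulVec,
    dotProduct, Finset.mul_sum, ← signOf_mul_signOf]
  exact Finset.sum_congr rfl fun k _ => by ring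

lemma involutive_beq {ι : Type*} (s : ι → Bool) :
    Function.Involutive fun ε : ι → Bool => fun j => ε j == s j := by
  intro ε
  funext j
  dsimp only
  cases ε j <;> cases s j <;> rfl

theorem faEquiv_E3_equivariant_general {n : ℕ} (hn : 0 < n)
    (X : Matrix (Fin n) (Fin 3) ℝ)
    (Φ : Matrix (Fin n) (Fin 3) ℝ → Matrix (Fin n) (Fin 3) ℝ)
    (lam : Fin 3 → ℝ) (hlam01 : lam 1 < lam 0) (hlam12 : lam 2 < lam 1)
    (u : Fin 3 → (Fin 3 → ℝ))
    (hortho : ∀ i j, u i ⬝ᵥ u j = if i = j then 1 else 0)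
    (heig : ∀ j, cov X *ᵥ u j = lam j • u j)
    (R : Matrix (Fin 3) (Fin 3) ℝ) (hR' : R * Rᵀ = 1)
    (b : Fin 3 → ℝ) :
    ∀ v : Fin 3 → (Fin 3 → ℝ),
      (∀ i j, v i ⬝ᵥ v j = if i = j then 1 else 0) →
      (∀ j, cov (X * Rᵀ + onesT b) *ᵥ v j = lam j • v j) →
      faEquiv Φ v (X * Rᵀ + onesT b) = faEquiv Φ u X * Rᵀ := by
  intro v hv hveig
  have hR : Rᵀ * R = 1 := mul_eq_one_comm.mp hR'
  have hlam : Function.Injective lam :=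
    (Fin.strictAnti_iff_succ_lt.mpr fun i => by fin_cases i <;> assumption).injective
  have hsign (j : Fin 3) : ∃ e, v j = signOf e • (R *ᵥ u j) := by
    have hpull := mulVec_transpose_mulVec_eq_smul hR
      (cov_mul_transpose_add_onesT hn X R b ▸ hveig j)
    have hunit : (Rᵀ *ᵥ v j) ⬝ᵥ (Rᵀ *ᵥ v j) = 1 := by
      rw [transpose_mulVec_dotProduct_self hR', hv j j, if_pos rfl]
    obtain ⟨e, he⟩ :=
      exists_signOf_smul_of_mulVec_eq_smul (transpose_cov X) hortho heig hlam hpull hunit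
    refine ⟨e, ?_⟩
    rw [← mulVec_smul, ← he, mulVec_mulVec, hR', one_mulVec]
  choose s hs using hsign
  rw [faEquiv, faEquiv, sub_onesT_centroid_mul_transpose_add_onesT hn, Matrix.smul_mul,
    Matrix.sum_mul]
  congr 1
  refine Fintype.sum_bijective _ (involutive_beq s).bijective _ _ fun ε => ?_
  rw [signedU_eq_mul_signedU hs, Matrix.transpose_mul, Matrix.mul_assoc _ Rᵀ,
    ← Matrix.mul_assoc Rᵀ, hR, Matrix.one_mul, Matrix.mul_assoc]

/-- The full frame-averaged equivariant prediction over the 8-element PCA frame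
is `E(3)`-equivariant in the rotation part and translation-invariant:
`⟨Φ⟩(XRᵀ + 1bᵀ) = ⟨Φ⟩(X) Rᵀ`. Here `u` is an orthonormal eigenbasis of
`Σ(X)` with decreasing eigenvalues, and `v` any corresponding eigenbasis of
`Σ(XRᵀ + 1bᵀ)`. -/
theorem faEquiv_E3_equivariant {n : ℕ} (hn : 0 < n)
    (X : Matrix (Fin n) (Fin 3) ℝ)
    (Φ : Matrix (Fin n) (Fin 3) ℝ → Matrix (Fin n) (Fin 3) ℝ)
    (lam : Fin 3 → ℝ) (hlam01 : lam 1 < lam 0) (hlam12 : lam 2 < lam 1)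
    (u : Fin 3 → (Fin 3 → ℝ))
    (hortho : ∀ i j, u i ⬝ᵥ u j = if i = j then 1 else 0)
    (heig : ∀ j, cov X *ᵥ u j = lam j • u j)
    (R : Matrix (Fin 3) (Fin 3) ℝ) (hR : Rᵀ * R = 1) (hR' : R * Rᵀ = 1)
    (b : Fin 3 → ℝ) :
    ∀ v : Fin 3 → (Fin 3 → ℝ),
      (∀ i j, v i ⬝ᵥ v j = if i = j then 1 else 0) →
      (∀ j, cov (X * Rᵀ + onesT b) *ᵥ v j = lam j • v j) →
      faEquiv Φ v (X * Rᵀ + onesT b) = faEquiv Φ u X * Rᵀ :=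
  faEquiv_E3_equivariant_general hn X Φ lam hlam01 hlam12 u hortho heig R hR' b
end
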